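/- arXiv:2507.02467 — 4 statements merged into one kernel-verified Lean document; each statement's English description precedes it below -/
import Mathlib

section
/- Let n ≥ 2, β > 0, and y_t = √(β/n)·(√(n−1) − √(t(n−t)) + √((t−1)(n−t+1))) for t = 1,…,n. For each t = 1,…,n−1, the partial sums satisfy y_1 + ⋯ + y_t = t·√(β(n−1)/n) − √(β·t(n−t)/n), and consequently (n·t/(n−t))·(ȳ_{0,n} − ȳ_{0,t})² = β, where ȳ_{0,u} = (1/u)·Σ_{j=1}^u y_j. -/
/-!
The summand is `√(β/n) · (√(n-1) - g t + g (t-1))` with `g x = √(x (n - x))`, so the partial sums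
telescope to `√(β/n) · (t √(n-1) - g t)`, using `g 0 = 0`. Since also `g n = 0`, the two means
differ by `√(β/n) · g t / t`, whose square is `β (n - t) / (n t)`.
-/

/-- Mean of the segment (u,v]. -/
noncomputable def segMean (y : ℕ → ℝ) (u v : ℕ) : ℝ :=
  (∑ j ∈ Finset.Ioc u v, y j) / ((v : ℝ) - u)

open Finset Real

lemma sum_Icc_one_eq_of_telescoping {R : Type*} [CommRing R] {c a : R} {g : R → R} {y : ℕ → R}
    (hy : ∀ j : ℕ, y j = c * (a - g j + g (j - 1))) (t : ℕ) :
    ∑ j ∈ Icc 1 t, y j = c * (t * a - g t + g 0) := by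
  induction t with
  | zero => simp
  | succ k ih =>
    rw [sum_Icc_succ_top (by omega), ih, hy]
    push_cast
    rw [add_sub_cancel_right]
    ring

lemma segMean_zero_left (y : ℕ → ℝ) (t : ℕ) :
    segMean y 0 t = (∑ j ∈ Icc 1 t, y j) / t := by
  rw [segMean, ← Icc_add_one_left_eq_Ioc, zero_add, Nat.cast_zero, sub_zero]

theorem stmt_5_general (n : ℕ) (β : ℝ) (hβ : 0 < β) (y : ℕ → ℝ)
    (hy : ∀ t : ℕ, y t = Real.sqrt (β / n) *
      (Real.sqrt ((n : ℝ) - 1) - Real.sqrt ((t : ℝ) * ((n : ℝ) - t))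
        + Real.sqrt (((t : ℝ) - 1) * ((n : ℝ) - t + 1)))) :
    ∀ t : ℕ, 1 ≤ t → t ≤ n - 1 →
      (∑ j ∈ Finset.Icc 1 t, y j
          = (t : ℝ) * Real.sqrt (β * ((n : ℝ) - 1) / n)
            - Real.sqrt (β * (t : ℝ) * ((n : ℝ) - t) / n)) ∧
      ((n : ℝ) * t / ((n : ℝ) - t)) * (segMean y 0 n - segMean y 0 t) ^ 2 = β := by
  intro t ht1 htn
  have ht0 : (0 : ℝ) < t := by exact_mod_cast ht1
  have hn1 : (1 : ℝ) ≤ n := by exact_mod_cast (by omega : 1 ≤ n)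
  have hn0 : (n : ℝ) ≠ 0 := by positivity
  have hnt : (0 : ℝ) < n - t := sub_pos.mpr (by exact_mod_cast (by omega : t < n))
  have hsum : ∀ u : ℕ, ∑ j ∈ Icc 1 u, y j = √(β / n) * (u * √(n - 1) - √(u * (n - u))) := by
    intro u
    have := sum_Icc_one_eq_of_telescoping (y := y) (c := √(β / n)) (a := √(n - 1))
      (g := fun x : ℝ => √(x * (n - x)))
      (fun j => by rw [hy, sub_sub_eq_add_sub, add_sub_right_comm]) u
    simpa using this
  have hsqrt_mul : ∀ x : ℝ, 0 ≤ x → √(β / n) * √x = √(β * x / n) := fun x hx => by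
    rw [← sqrt_mul' _ hx, div_mul_eq_mul_div]
  refine ⟨?_, ?_⟩
  · rw [hsum, mul_sub, mul_left_comm, hsqrt_mul _ (by linarith), hsqrt_mul _ (by positivity),
      mul_assoc]
  · have hdiff : segMean y 0 n - segMean y 0 t = √(β / n) * √(t * (n - t)) / t := by
      rw [segMean_zero_left, segMean_zero_left, hsum, hsum, sub_self, mul_zero, sqrt_zero]
      field_simp
      ring
    rw [hdiff, div_pow, mul_pow, sq_sqrt (by positivity), sq_sqrt (by positivity)]
    field_simp

theorem stmt_5 (n : ℕ) (hn : 2 ≤ n) (β : ℝ) (hβ : 0 < β) (y : ℕ → ℝ)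
    (hy : ∀ t : ℕ, y t = Real.sqrt (β / n) *
      (Real.sqrt ((n : ℝ) - 1) - Real.sqrt ((t : ℝ) * ((n : ℝ) - t))
        + Real.sqrt (((t : ℝ) - 1) * ((n : ℝ) - t + 1)))) :
    ∀ t : ℕ, 1 ≤ t → t ≤ n - 1 →
      (∑ j ∈ Finset.Icc 1 t, y j
          = (t : ℝ) * Real.sqrt (β * ((n : ℝ) - 1) / n)
            - Real.sqrt (β * (t : ℝ) * ((n : ℝ) - t) / n)) ∧
      ((n : ℝ) * t / ((n : ℝ) - t)) * (segMean y 0 n - segMean y 0 t) ^ 2 = β :=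
  stmt_5_general n β hβ y hy
end

section
/- Let A : ℝ → ℝ be strictly convex differentiable with D* its conjugate ((D*)' = (A')⁻¹), and let S₁, ΔS, Q₁, ΔQ be real constants with ΔS ≠ 0. Consider 𝔻(x) = −D*(S₁ + x·ΔS) − (Q₁ + x·ΔQ). Then 𝔻 is concave, its unique critical point is x* = (1/ΔS)·(A'(−ΔQ/ΔS) − S₁), and 𝔻(x*) = A(−ΔQ/ΔS) + (ΔQ/ΔS)·S₁ − Q₁. -/
/-!
On `Ω = range A'` the function `D*` is the Legendre transform of `A`: the tangent-line inequality
for `A` at `θ₀ = (A')⁻¹ x` gives Fenchel–Young, `x θ - A θ ≤ D*(x)` with equality at `θ₀`. So `D*` is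
a supremum of affine functions, hence convex (`Ω` is an interval by Darboux), and its difference
quotients at `s` are squeezed between `(A')⁻¹ s` and `(A')⁻¹ y`; since `(A')⁻¹` is monotone and maps
`Ω` onto `ℝ`, it is continuous on the open set `Ω`, so `(D*)' = (A')⁻¹`. Thus `𝔻` is concave with
`𝔻'(x) = -(A')⁻¹(S₁ + x ΔS) ΔS - ΔQ`, which vanishes iff `S₁ + x ΔS = A'(-ΔQ/ΔS)`.
-/

open Set Filter Topology Function

theorem ConvexOn.add_mul_sub_le_of_hasDerivAt {f : ℝ → ℝ} {S : Set ℝ} {x y d : ℝ}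
    (hfc : ConvexOn ℝ S f) (hx : x ∈ S) (hy : y ∈ S) (hf : HasDerivAt f d x) :
    f x + d * (y - x) ≤ f y := by
  rcases lt_trichotomy x y with hxy | rfl | hyx
  · have := hfc.le_slope_of_hasDerivAt hx hy hxy hf
    rw [slope_def_field, le_div_iff₀ (sub_pos.mpr hxy)] at this
    linarith
  · simp
  · have := hfc.slope_le_of_hasDerivAt hy hx hyx hf
    rw [slope_def_field, div_le_iff₀ (sub_pos.mpr hyx)] at this
    linarith

theorem StrictConvexOn.strictMono_of_hasDerivAt {f f' : ℝ → ℝ}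
    (hfc : StrictConvexOn ℝ univ f) (hf : ∀ x, HasDerivAt f (f' x) x) : StrictMono f' := by
  have h := hfc.strictMonoOn_deriv fun x _ => (hf x).differentiableAt
  rw [funext fun x => (hf x).deriv] at h
  exact strictMonoOn_univ.mp h

theorem StrictMono.continuousAt_of_leftInverse {α β : Type*} [LinearOrder α] [TopologicalSpace α]
    [OrderTopology α] [LinearOrder β] [TopologicalSpace β] [OrderTopology β] [DenselyOrdered α]
    {f : α → β} {g : β → α} (hf : StrictMono f) (hg : LeftInverse g f) {s : β}
    (hs : range f ∈ 𝓝 s) : ContinuousAt g s := by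
  refine continuousAt_of_monotoneOn_of_image_mem_nhds ?_ hs ?_
  · rintro _ ⟨a, rfl⟩ _ ⟨b, rfl⟩ hab
    rw [hg, hg]
    exact hf.le_iff_le.mp hab
  · rw [← range_comp, hg.comp_eq_id, range_id]
    exact univ_mem

theorem ConvexOn.comp_add_mul {s : Set ℝ} {φ : ℝ → ℝ} (hφ : ConvexOn ℝ s φ) (a b : ℝ) :
    ConvexOn ℝ {x | a + x * b ∈ s} (fun x => φ (a + x * b)) := by
  convert hφ.comp_affineMap (AffineMap.lineMap a (a + b)) using 1 <;> ext x <;>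
    simp [AffineMap.lineMap_apply_ring', add_comm]

theorem convex_range_of_hasDerivAt {f f' : ℝ → ℝ} (hf : ∀ x, HasDerivAt f (f' x) x) :
    Convex ℝ (range f') :=
  image_univ (f := f') ▸ convex_univ.image_hasDerivWithinAt fun x _ => (hf x).hasDerivWithinAt

noncomputable def legendreTransform (f g : ℝ → ℝ) (x : ℝ) : ℝ := x * g x - f (g x)

section LegendreTransform

variable {f g : ℝ → ℝ}

theorem mul_sub_le_legendreTransform (hfc : ConvexOn ℝ univ f) {x : ℝ}
    (hx : HasDerivAt f x (g x)) (θ : ℝ) : x * θ - f θ ≤ legendreTransform f g x := by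
  have := hfc.add_mul_sub_le_of_hasDerivAt (mem_univ _) (mem_univ θ) hx
  rw [legendreTransform]
  linarith

theorem mul_sub_le_legendreTransform_sub (hfc : ConvexOn ℝ univ f) {y : ℝ}
    (hy : HasDerivAt f y (g y)) (x : ℝ) :
    (y - x) * g x ≤ legendreTransform f g y - legendreTransform f g x := by
  have := mul_sub_le_legendreTransform hfc hy (g x)
  linarith [show legendreTransform f g x = x * g x - f (g x) from rfl]

theorem convexOn_legendreTransform (hfc : ConvexOn ℝ univ f) {Ω : Set ℝ} (hΩ : Convex ℝ Ω)
    (hg : ∀ x ∈ Ω, HasDerivAt f x (g x)) : ConvexOn ℝ Ω (legendreTransform f g) := by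
  refine ⟨hΩ, fun x hx y hy a b ha hb hab => ?_⟩
  set θ := g (a • x + b • y)
  have hx' := mul_le_mul_of_nonneg_left (mul_sub_le_legendreTransform hfc (hg x hx) θ) ha
  have hy' := mul_le_mul_of_nonneg_left (mul_sub_le_legendreTransform hfc (hg y hy) θ) hb
  calc legendreTransform f g (a • x + b • y) = a * (x * θ - f θ) + b * (y * θ - f θ) := by
        rw [legendreTransform, smul_eq_mul, smul_eq_mul]; linear_combination f θ * hab
    _ ≤ a • legendreTransform f g x + b • legendreTransform f g y := by
        simp only [smul_eq_mul]; linarith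

theorem hasDerivAt_legendreTransform (hfc : ConvexOn ℝ univ f) {s : ℝ}
    (hg : ∀ᶠ y in 𝓝 s, HasDerivAt f y (g y)) (hgc : ContinuousAt g s) :
    HasDerivAt (legendreTransform f g) (g s) s := by
  rw [hasDerivAt_iff_isLittleO, Asymptotics.isLittleO_iff]
  intro c hc
  filter_upwards [hg, hgc.eventually (Metric.closedBall_mem_nhds (g s) hc)] with y hy hyc
  have hlow := mul_sub_le_legendreTransform_sub hfc hy s
  have hup := mul_sub_le_legendreTransform_sub hfc hg.self_of_nhds y
  rw [Real.dist_eq] at hyc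
  rw [smul_eq_mul, Real.norm_eq_abs, Real.norm_eq_abs, abs_of_nonneg (by linarith)]
  calc _ ≤ (y - s) * (g y - g s) := by linarith
    _ ≤ |y - s| * |g y - g s| := by rw [← abs_mul]; exact le_abs_self _
    _ ≤ c * |y - s| := by rw [mul_comm]; gcongr

theorem hasDerivAt_apply_of_leftInverse {f' : ℝ → ℝ} (hf : ∀ θ, HasDerivAt f (f' θ) θ)
    (hg : LeftInverse g f') {x : ℝ} (hx : x ∈ range f') : HasDerivAt f x (g x) := by
  obtain ⟨θ, rfl⟩ := hx
  rw [hg]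
  exact hf θ

theorem hasDerivAt_legendreTransform_of_isOpen_range {f' : ℝ → ℝ}
    (hfc : StrictConvexOn ℝ univ f) (hf : ∀ θ, HasDerivAt f (f' θ) θ) (hg : LeftInverse g f')
    (hopen : IsOpen (range f')) {s : ℝ} (hs : s ∈ range f') :
    HasDerivAt (legendreTransform f g) (g s) s :=
  hasDerivAt_legendreTransform hfc.convexOn
    ((hopen.eventually_mem hs).mono fun _ => hasDerivAt_apply_of_leftInverse hf hg)
    ((hfc.strictMono_of_hasDerivAt hf).continuousAt_of_leftInverse hg (hopen.mem_nhds hs))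

end LegendreTransform

def dustDecision (D : ℝ → ℝ) (S₁ ΔS Q₁ ΔQ x : ℝ) : ℝ := -D (S₁ + x * ΔS) - (Q₁ + x * ΔQ)

section DustDecision

variable {D : ℝ → ℝ} {S₁ ΔS Q₁ ΔQ : ℝ}

theorem ConvexOn.concaveOn_dustDecision {Ω : Set ℝ} (hD : ConvexOn ℝ Ω D) :
    ConcaveOn ℝ {x | S₁ + x * ΔS ∈ Ω} (dustDecision D S₁ ΔS Q₁ ΔQ) := by
  have hDℓ := hD.comp_add_mul S₁ ΔS
  exact hDℓ.neg.sub (((convexOn_id convex_univ).comp_add_mul Q₁ ΔQ).subset (subset_univ _) hDℓ.1)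

theorem hasDerivAt_dustDecision {d x : ℝ} (hD : HasDerivAt D d (S₁ + x * ΔS)) :
    HasDerivAt (dustDecision D S₁ ΔS Q₁ ΔQ) (-(d * ΔS) - ΔQ) x := by
  have hℓ (a b : ℝ) : HasDerivAt (fun x => a + x * b) b x := by
    simpa using ((hasDerivAt_id x).mul_const b).const_add a
  exact (hD.comp x (hℓ S₁ ΔS)).neg.sub (hℓ Q₁ ΔQ)

end DustDecision

theorem stmt_13_general (A A' Ainv : ℝ → ℝ) (Ω : Set ℝ)
    (hconv : StrictConvexOn ℝ Set.univ A)
    (hderiv : ∀ x : ℝ, HasDerivAt A (A' x) x)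
    (hopen : IsOpen Ω)
    (hrange : Set.range A' = Ω)
    (hinv_left : ∀ θ : ℝ, Ainv (A' θ) = θ)
    (S₁ ΔS Q₁ ΔQ : ℝ) (hΔS : ΔS ≠ 0)
    (Dstar 𝔻 : ℝ → ℝ)
    (hDstar : ∀ x : ℝ, Dstar x = x * Ainv x - A (Ainv x))
    (h𝔻 : ∀ x : ℝ, 𝔻 x = -Dstar (S₁ + x * ΔS) - (Q₁ + x * ΔQ))
    (xstar : ℝ) (hxstar : xstar = (1 / ΔS) * (A' (-ΔQ / ΔS) - S₁)) :
    ConcaveOn ℝ {x : ℝ | S₁ + x * ΔS ∈ Ω} 𝔻 ∧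
    HasDerivAt 𝔻 0 xstar ∧
    (∀ x : ℝ, S₁ + x * ΔS ∈ Ω → HasDerivAt 𝔻 0 x → x = xstar) ∧
    𝔻 xstar = A (-ΔQ / ΔS) + (ΔQ / ΔS) * S₁ - Q₁ := by
  obtain rfl : Dstar = legendreTransform A Ainv := funext hDstar
  obtain rfl : 𝔻 = dustDecision (legendreTransform A Ainv) S₁ ΔS Q₁ ΔQ := funext h𝔻
  subst hrange
  have h𝔻' (x : ℝ) (hx : S₁ + x * ΔS ∈ range A') :
      HasDerivAt (dustDecision (legendreTransform A Ainv) S₁ ΔS Q₁ ΔQ)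
        (-(Ainv (S₁ + x * ΔS) * ΔS) - ΔQ) x :=
    hasDerivAt_dustDecision
      (hasDerivAt_legendreTransform_of_isOpen_range hconv hderiv hinv_left hopen hx)
  have hstar : S₁ + xstar * ΔS = A' (-ΔQ / ΔS) := by
    rw [hxstar]; field_simp; ring
  refine ⟨?_, ?_, fun x hx h0 => ?_, ?_⟩
  · exact (convexOn_legendreTransform hconv.convexOn (convex_range_of_hasDerivAt hderiv)
      fun _ => hasDerivAt_apply_of_leftInverse hderiv hinv_left).concaveOn_dustDecision
  · simpa [hstar, hinv_left, hΔS] using h𝔻' xstar ⟨_, hstar.symm⟩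
  · have hθ : Ainv (S₁ + x * ΔS) = -ΔQ / ΔS := by
      rw [eq_div_iff hΔS]
      linarith [(h𝔻' x hx).unique h0]
    obtain ⟨θ, hθx⟩ := hx
    rw [← hθx, hinv_left] at hθ
    rw [hθ] at hθx
    exact mul_right_cancel₀ hΔS (by linarith)
  · rw [dustDecision, hstar, legendreTransform, hinv_left, hxstar]
    field_simp
    ring

theorem stmt_13 (A A' Ainv : ℝ → ℝ) (Ω : Set ℝ)
    (hconv : StrictConvexOn ℝ Set.univ A)
    (hderiv : ∀ x : ℝ, HasDerivAt A (A' x) x)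
    (hcont : Continuous A')
    (hopen : IsOpen Ω)
    (hrange : Set.range A' = Ω)
    (hinv_left : ∀ θ : ℝ, Ainv (A' θ) = θ)
    (hinv_right : ∀ x ∈ Ω, A' (Ainv x) = x)
    (S₁ ΔS Q₁ ΔQ : ℝ) (hΔS : ΔS ≠ 0)
    (Dstar 𝔻 : ℝ → ℝ)
    (hDstar : ∀ x : ℝ, Dstar x = x * Ainv x - A (Ainv x))
    (h𝔻 : ∀ x : ℝ, 𝔻 x = -Dstar (S₁ + x * ΔS) - (Q₁ + x * ΔQ))
    (xstar : ℝ) (hxstar : xstar = (1 / ΔS) * (A' (-ΔQ / ΔS) - S₁))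
    (hdom : S₁ + xstar * ΔS ∈ Ω) :
    ConcaveOn ℝ {x : ℝ | S₁ + x * ΔS ∈ Ω} 𝔻 ∧
    HasDerivAt 𝔻 0 xstar ∧
    (∀ x : ℝ, S₁ + x * ΔS ∈ Ω → HasDerivAt 𝔻 0 x → x = xstar) ∧
    𝔻 xstar = A (-ΔQ / ΔS) + (ΔQ / ΔS) * S₁ - Q₁ :=
  stmt_13_general A A' Ainv Ω hconv hderiv hopen hrange hinv_left S₁ ΔS Q₁ ΔQ hΔS Dstar 𝔻 hDstar h𝔻
    xstar hxstar
end

section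
/- (One-constraint Gaussian dual maximum) Let d ≥ 1, vectors S̄_st, S̄_rs ∈ ℝ^d, reals Q_r, Q_s, β, and positive integers r < s < t. Define Δ = S̄_st − S̄_rs, Q̄ = (Q_s − Q_r)/(s−r), R = √(‖S̄_rs‖² + 2Q̄) (assume ‖S̄_rs‖² + 2Q̄ ≥ 0), and the Gaussian dual D(μ) = (t−s)·(−(1−μ)·‖(S̄_st − μS̄_rs)/(1−μ)‖²/2 + μ·Q̄) + Q_s + β for μ ∈ [0,1). Then max_{μ∈[0,1)} D(μ) = −((t−s)/2)‖S̄_st‖² + Q_s + β if ‖Δ‖ ≥ R, and equals −((t−s)/2)‖S̄_st‖² + Q_s + β + ((t−s)/2)(‖Δ‖ − R)² if ‖Δ‖ < R. -/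
/-!
Substituting `u = 1 - μ ∈ (0, 1]` and expanding `‖Δ + u S̄_rs‖²` turns the dual into
`D = C - (t - s) · (‖Δ‖² / (2u) + u R² / 2)` with `C` independent of `μ`. By AM-GM the bracket is
at least `‖Δ‖ R`, with equality at `u = ‖Δ‖ / R`; this point lies in `(0, 1]` exactly when
`‖Δ‖ ≤ R` (for `Δ = 0` only as the limit `u → 0`). Otherwise the bracket decreases on `(0, 1]`
and its minimum is at `u = 1`, i.e. `μ = 0`.
-/

open Set

noncomputable section

/-- The `μ`-dependent part of the Gaussian dual, in the variable `u = 1 - μ`. -/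
def dualPenalty (a R u : ℝ) : ℝ := a ^ 2 / (2 * u) + u * R ^ 2 / 2

lemma mul_le_dualPenalty (a R : ℝ) {u : ℝ} (hu : 0 < u) : a * R ≤ dualPenalty a R u := by
  have h : dualPenalty a R u - a * R = (a - u * R) ^ 2 / (2 * u) := by
    unfold dualPenalty; field_simp; ring
  have : 0 ≤ (a - u * R) ^ 2 / (2 * u) := by positivity
  linarith

lemma dualPenalty_div (a : ℝ) {R : ℝ} (hR : R ≠ 0) : dualPenalty a R (a / R) = a * R := by
  unfold dualPenalty
  rcases eq_or_ne a 0 with rfl | ha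
  · simp
  · field_simp; ring

lemma isLeast_dualPenalty_of_le {a R : ℝ} (hR : 0 ≤ R) (hRa : R ≤ a) :
    IsLeast (dualPenalty a R '' Ioc 0 1) ((a ^ 2 + R ^ 2) / 2) := by
  refine ⟨⟨1, ⟨one_pos, le_rfl⟩, by unfold dualPenalty; ring⟩, ?_⟩
  rintro _ ⟨u, ⟨hu0, hu1⟩, rfl⟩
  have h : dualPenalty a R u - (a ^ 2 + R ^ 2) / 2 = (1 - u) * (a ^ 2 - u * R ^ 2) / (2 * u) := by
    unfold dualPenalty; field_simp; ring
  have hRa2 : u * R ^ 2 ≤ a ^ 2 := by nlinarith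
  have : 0 ≤ (1 - u) * (a ^ 2 - u * R ^ 2) / (2 * u) :=
    div_nonneg (mul_nonneg (by linarith) (by linarith)) (by positivity)
  linarith

lemma isGLB_dualPenalty_of_lt {a R : ℝ} (ha : 0 ≤ a) (haR : a < R) :
    IsGLB (dualPenalty a R '' Ioc 0 1) (a * R) := by
  rcases ha.eq_or_lt with rfl | ha
  · have hlin : dualPenalty 0 R = fun u => u * (R ^ 2 / 2) := by
      funext u; unfold dualPenalty; ring
    rw [hlin, image_mul_right_Ioc _ _ (by positivity), zero_mul, zero_mul]
    exact isGLB_Ioc (by positivity)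
  · have hR : 0 < R := ha.trans haR
    refine IsLeast.isGLB ⟨⟨a / R, ⟨by positivity, (div_le_one hR).2 haR.le⟩,
      dualPenalty_div a hR.ne'⟩, ?_⟩
    rintro _ ⟨u, ⟨hu0, -⟩, rfl⟩
    exact mul_le_dualPenalty a R hu0

lemma IsGLB.isLUB_image_const_sub_mul {s : Set ℝ} {m K : ℝ} (hK : 0 ≤ K) (h : IsGLB s m)
    (C : ℝ) : IsLUB ((fun y => C - K * y) '' s) (C - K * m) := by
  have hK' : IsGLB ((K * ·) '' s) (K * m) := h.mul_left hK
  rw [← image_image (C - ·) (K * ·)]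
  refine ⟨?_, fun b hb => ?_⟩
  · rintro _ ⟨y, hy, rfl⟩
    linarith [hK'.1 hy]
  · have : C - b ∈ lowerBounds ((K * ·) '' s) := fun y hy => by
      linarith [hb ⟨y, hy, rfl⟩]
    linarith [hK'.2 this]

lemma mul_norm_inv_smul_sub_sq {E : Type*} [NormedAddCommGroup E] [InnerProductSpace ℝ E]
    (x y : E) {μ : ℝ} (hμ : μ < 1) :
    (1 - μ) * ‖(1 - μ)⁻¹ • (x - μ • y)‖ ^ 2
      = ‖x - y‖ ^ 2 / (1 - μ) + 2 * inner ℝ (x - y) y + (1 - μ) * ‖y‖ ^ 2 := by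
  have hu : 0 < 1 - μ := by linarith
  have hsplit : x - μ • y = (x - y) + (1 - μ) • y := by module
  rw [hsplit, norm_smul, mul_pow, norm_add_sq_real, real_inner_smul_right, norm_smul,
    Real.norm_eq_abs, Real.norm_eq_abs, abs_of_pos (inv_pos.2 hu), abs_of_pos hu]
  field_simp

end

theorem stmt_16_general (d : ℕ) (s t : ℕ) (hst : s < t)
    (Sst Srs : EuclideanSpace ℝ (Fin d)) (Qs β : ℝ)
    (Qbar : ℝ)
    (hpos : 0 ≤ ‖Srs‖ ^ 2 + 2 * Qbar)
    (R : ℝ) (hR : R = Real.sqrt (‖Srs‖ ^ 2 + 2 * Qbar))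
    (D : ℝ → ℝ)
    (hD : ∀ μ : ℝ, D μ = ((t : ℝ) - s) *
      (-(1 - μ) * ‖(1 - μ)⁻¹ • (Sst - μ • Srs)‖ ^ 2 / 2 + μ * Qbar) + Qs + β) :
    (R ≤ ‖Sst - Srs‖ →
      sSup (D '' Set.Ico (0 : ℝ) 1) = -(((t : ℝ) - s) / 2) * ‖Sst‖ ^ 2 + Qs + β) ∧
    (‖Sst - Srs‖ < R →
      sSup (D '' Set.Ico (0 : ℝ) 1)
        = -(((t : ℝ) - s) / 2) * ‖Sst‖ ^ 2 + Qs + β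
          + (((t : ℝ) - s) / 2) * (‖Sst - Srs‖ - R) ^ 2) := by
  set K : ℝ := (t : ℝ) - s
  set a : ℝ := ‖Sst - Srs‖
  set C : ℝ := Qs + β + K * (Qbar - inner ℝ (Sst - Srs) Srs)
  have hK : 0 ≤ K := sub_nonneg.2 (by exact_mod_cast hst.le)
  have hR0 : 0 ≤ R := hR ▸ Real.sqrt_nonneg _
  have hR2 : R ^ 2 = ‖Srs‖ ^ 2 + 2 * Qbar := hR ▸ Real.sq_sqrt hpos
  have hSst : ‖Sst‖ ^ 2 = a ^ 2 + 2 * inner ℝ (Sst - Srs) Srs + ‖Srs‖ ^ 2 := by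
    rw [← norm_add_sq_real, sub_add_cancel]
  have himage : D '' Ico 0 1 = (fun y => C - K * y) '' (dualPenalty a R '' Ioc 0 1) := by
    have hone_sub : Ioc (0 : ℝ) 1 = (1 - ·) '' Ico 0 1 := by simp
    rw [hone_sub, image_image, image_image]
    refine image_congr fun μ hμ => ?_
    have h := mul_norm_inv_smul_sub_sq Sst Srs hμ.2
    rw [hD, dualPenalty, hR2, neg_mul, h]
    simp only [a, C]
    have hu : 1 - μ ≠ 0 := (sub_pos.2 hμ.2).ne'
    field_simp
    ring
  have hne : ((fun y => C - K * y) '' (dualPenalty a R '' Ioc 0 1)).Nonempty :=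
    ((nonempty_Ioc.2 one_pos).image _).image _
  rw [himage]
  refine ⟨fun hRa => ?_, fun haR => ?_⟩
  · rw [((isLeast_dualPenalty_of_le hR0 hRa).isGLB.isLUB_image_const_sub_mul hK C).csSup_eq hne]
    linear_combination (-K / 2) * hR2 + (K / 2) * hSst
  · rw [((isGLB_dualPenalty_of_lt (norm_nonneg _) haR).isLUB_image_const_sub_mul hK C).csSup_eq
      hne]
    linear_combination (-K / 2) * hR2 + (K / 2) * hSst

theorem stmt_16 (d : ℕ) (hd : 1 ≤ d) (r s t : ℕ) (hr : 0 < r) (hrs : r < s) (hst : s < t)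
    (Sst Srs : EuclideanSpace ℝ (Fin d)) (Qr Qs β : ℝ)
    (Qbar : ℝ) (hQbar : Qbar = (Qs - Qr) / ((s : ℝ) - r))
    (hpos : 0 ≤ ‖Srs‖ ^ 2 + 2 * Qbar)
    (R : ℝ) (hR : R = Real.sqrt (‖Srs‖ ^ 2 + 2 * Qbar))
    (D : ℝ → ℝ)
    (hD : ∀ μ : ℝ, D μ = ((t : ℝ) - s) *
      (-(1 - μ) * ‖(1 - μ)⁻¹ • (Sst - μ • Srs)‖ ^ 2 / 2 + μ * Qbar) + Qs + β) :
    (R ≤ ‖Sst - Srs‖ →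
      sSup (D '' Set.Ico (0 : ℝ) 1) = -(((t : ℝ) - s) / 2) * ‖Sst‖ ^ 2 + Qs + β) ∧
    (‖Sst - Srs‖ < R →
      sSup (D '' Set.Ico (0 : ℝ) 1)
        = -(((t : ℝ) - s) / 2) * ‖Sst‖ ^ 2 + Qs + β
          + (((t : ℝ) - s) / 2) * (‖Sst - Srs‖ - R) ^ 2) :=
  stmt_16_general d s t hst Sst Srs Qs β Qbar hpos R hR D hD
end

section
/- (No-pruning condition in Gaussian no-change case) Let r < s < t be positive integers and S̄_{0r}, S̄_{rs}, S̄_{st}, S̄_{0s}, S̄_{0t} ∈ ℝ^d the corresponding segment means of a fixed sequence (so that r·S̄_{0r} + (s−r)·S̄_{rs} = s·S̄_{0s}, etc.). With Q_u = −(u/2)·‖S̄_{0u}‖² for u ∈ {r,s,t}, the maximum of the single-constraint Gaussian dual exceeds Q_t + β (i.e., index s is pruned by r at time t) if and only if √(r/s)·‖S̄_{rs} − S̄_{0r}‖ − ‖S̄_{st} − S̄_{rs}‖ > √(s/t)·‖S̄_{st} − S̄_{0s}‖, provided ‖S̄_{st} − S̄_{rs}‖ < √(r/s)·‖S̄_{rs}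 − S̄_{0r}‖. -/
/-!
Both sides of the pruning test are differences of Gaussian costs `-(u/2)‖S̄‖²` of adjacent
segments. The variance decomposition `u‖a‖² + (v-u)‖b‖² = v‖c‖² + (u(v-u)/v)‖b-a‖²`, for the
mean `c` of means `a` (weight `u`) and `b` (weight `v-u`), turns them into squared distances
between segment means: the radius `R` becomes `√(r/s)‖S̄_{rs} - S̄_{0r}‖`, the gap `Q_t - Q_s`
becomes `-((t-s)/2)(‖S̄_{st}‖² - (s/t)‖S̄_{st} - S̄_{0s}‖²)`, and the test reduces to comparing
the squares of two nonnegative numbers.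
-/

open Real

section GaussianCost

variable {E : Type*} [NormedAddCommGroup E] [InnerProductSpace ℝ E]

noncomputable def gaussianCost (u : ℝ) (m : E) : ℝ := -(u / 2) * ‖m‖ ^ 2

theorem sq_mul_norm_sq_of_smul_add_smul_eq {w₁ w₂ : ℝ} {x y m : E}
    (h : w₁ • x + w₂ • y = (w₁ + w₂) • m) :
    (w₁ + w₂) ^ 2 * ‖m‖ ^ 2 =
      (w₁ + w₂) * (w₁ * ‖x‖ ^ 2 + w₂ * ‖y‖ ^ 2) - w₁ * w₂ * ‖y - x‖ ^ 2 := by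
  have hm : ‖(w₁ + w₂) • m‖ ^ 2 = (w₁ + w₂) ^ 2 * ‖m‖ ^ 2 := by
    rw [norm_smul, mul_pow, Real.norm_eq_abs, sq_abs]
  have hxy := norm_add_sq_real (w₁ • x) (w₂ • y)
  rw [h, hm, norm_smul, norm_smul, mul_pow, mul_pow, Real.norm_eq_abs, Real.norm_eq_abs, sq_abs,
    sq_abs, real_inner_smul_left, real_inner_smul_right] at hxy
  rw [hxy, norm_sub_sq_real, real_inner_comm]
  ring

theorem gaussianCost_merge {u v : ℝ} (hv : v ≠ 0) {a b c : E}
    (h : u • a + (v - u) • b = v • c) :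
    gaussianCost v c - gaussianCost u a =
      gaussianCost (v - u) b + (v - u) / 2 * (u / v) * ‖b - a‖ ^ 2 := by
  have hw : u + (v - u) = v := by ring
  have key := sq_mul_norm_sq_of_smul_add_smul_eq (h.trans (by rw [hw]))
  rw [hw] at key
  unfold gaussianCost
  field_simp
  linear_combination (-1 : ℝ) * key

end GaussianCost

theorem sq_lt_sub_sq_iff {x y q : ℝ} (hxy : x < y) (hq : 0 ≤ q) :
    q ^ 2 < (x - y) ^ 2 ↔ q < y - x := by
  rw [show (x - y) ^ 2 = (y - x) ^ 2 by ring]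
  exact pow_lt_pow_iff_left₀ hq (sub_pos.mpr hxy).le two_ne_zero

theorem stmt_19_general (d : ℕ) (r s t : ℕ) (hrs : r < s) (hst : s < t)
    (S0r Srs Sst S0s S0t : EuclideanSpace ℝ (Fin d))
    (hcons1 : (r : ℝ) • S0r + ((s : ℝ) - r) • Srs = (s : ℝ) • S0s)
    (hcons2 : (s : ℝ) • S0s + ((t : ℝ) - s) • Sst = (t : ℝ) • S0t)
    (β : ℝ) (Qr Qs Qt : ℝ)
    (hQr : Qr = -((r : ℝ) / 2) * ‖S0r‖ ^ 2)
    (hQs : Qs = -((s : ℝ) / 2) * ‖S0s‖ ^ 2)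
    (hQt : Qt = -((t : ℝ) / 2) * ‖S0t‖ ^ 2)
    (R : ℝ) (hR : R = Real.sqrt (‖Srs‖ ^ 2 + 2 * ((Qs - Qr) / ((s : ℝ) - r))))
    (hlt : ‖Sst - Srs‖ < Real.sqrt ((r : ℝ) / s) * ‖Srs - S0r‖) :
    (-(((t : ℝ) - s) / 2) * ‖Sst‖ ^ 2 + Qs + β
        + (((t : ℝ) - s) / 2) * (‖Sst - Srs‖ - R) ^ 2 > Qt + β)
      ↔ Real.sqrt ((r : ℝ) / s) * ‖Srs - S0r‖ - ‖Sst - Srs‖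
          > Real.sqrt ((s : ℝ) / t) * ‖Sst - S0s‖ := by
  have hr₀ : (0 : ℝ) ≤ r := r.cast_nonneg
  have hrs' : (r : ℝ) < s := by exact_mod_cast hrs
  have hst' : (s : ℝ) < t := by exact_mod_cast hst
  have hmerge₁ := gaussianCost_merge (by linarith) hcons1
  have hmerge₂ := gaussianCost_merge (by linarith) hcons2
  unfold gaussianCost at hmerge₁ hmerge₂
  have hR' : R = √(r / s) * ‖Srs - S0r‖ := by
    have hrad : ‖Srs‖ ^ 2 + 2 * ((Qs - Qr) / ((s : ℝ) - r)) = r / s * ‖Srs - S0r‖ ^ 2 := by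
      have hsr : (s : ℝ) - r ≠ 0 := by linarith
      rw [hQr, hQs, hmerge₁]
      field_simp
      ring
    rw [hR, hrad, sqrt_mul (by positivity), sqrt_sq (norm_nonneg _)]
  have hgap : Qt - Qs = -(((t : ℝ) - s) / 2) * ‖Sst‖ ^ 2
      + ((t : ℝ) - s) / 2 * (√(s / t) * ‖Sst - S0s‖) ^ 2 := by
    rw [hQs, hQt, hmerge₂, mul_pow, sq_sqrt (by positivity)]
    ring
  have hdiff : -(((t : ℝ) - s) / 2) * ‖Sst‖ ^ 2 + Qs + β
      + (((t : ℝ) - s) / 2) * (‖Sst - Srs‖ - R) ^ 2 - (Qt + β)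
      = ((t : ℝ) - s) / 2 * ((‖Sst - Srs‖ - R) ^ 2 - (√(s / t) * ‖Sst - S0s‖) ^ 2) := by
    linear_combination (-1 : ℝ) * hgap
  rw [gt_iff_lt, ← sub_pos, hdiff, mul_pos_iff_of_pos_left (by linarith), sub_pos,
    sq_lt_sub_sq_iff (hR' ▸ hlt) (by positivity), hR']

theorem stmt_19 (d : ℕ) (r s t : ℕ) (hr : 0 < r) (hrs : r < s) (hst : s < t)
    (S0r Srs Sst S0s S0t : EuclideanSpace ℝ (Fin d))
    (hcons1 : (r : ℝ) • S0r + ((s : ℝ) - r) • Srs = (s : ℝ) • S0s)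
    (hcons2 : (s : ℝ) • S0s + ((t : ℝ) - s) • Sst = (t : ℝ) • S0t)
    (β : ℝ) (Qr Qs Qt : ℝ)
    (hQr : Qr = -((r : ℝ) / 2) * ‖S0r‖ ^ 2)
    (hQs : Qs = -((s : ℝ) / 2) * ‖S0s‖ ^ 2)
    (hQt : Qt = -((t : ℝ) / 2) * ‖S0t‖ ^ 2)
    (R : ℝ) (hR : R = Real.sqrt (‖Srs‖ ^ 2 + 2 * ((Qs - Qr) / ((s : ℝ) - r))))
    (hlt : ‖Sst - Srs‖ < Real.sqrt ((r : ℝ) / s) * ‖Srs - S0r‖) :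
    (-(((t : ℝ) - s) / 2) * ‖Sst‖ ^ 2 + Qs + β
        + (((t : ℝ) - s) / 2) * (‖Sst - Srs‖ - R) ^ 2 > Qt + β)
      ↔ Real.sqrt ((r : ℝ) / s) * ‖Srs - S0r‖ - ‖Sst - Srs‖
          > Real.sqrt ((s : ℝ) / t) * ‖Sst - S0s‖ :=
  stmt_19_general d r s t hrs hst S0r Srs Sst S0s S0t hcons1 hcons2 β Qr Qs Qt hQr hQs hQt R hR hlt
end
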